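/- Let φ be twice continuously differentiable on an interval I with 0 < m ≤ φ''(x) ≤ M for all x ∈ I, and let c₀ = √(M/m). Let [x₁, x₂] ⊆ I with √Dφ(x₁, x₂) = r > 0, let l > 0, and let I' be a finite collection of pairwise disjoint closed intervals [a, a'] ⊆ I, each intersecting [x₁, x₂] and each satisfying √Dφ(a, a') ≥ l. Then the number of intervals in I' is at most c₀·r/l + 2. -/

import Mathlib

/-!
Since `m ≤ φ'' ≤ M` on `I`, the Bregman divergence is squeezed between the quadratics
`m/2 (a - b)²` and `M/2 (a - b)²`. Hence every interval of `I'` has length at least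
`l / √(M/2)`, while `[x₁, x₂]` has length at most `r / √(m/2)`. Disjoint intervals lying inside
`[x₁, x₂]` have total length at most `x₂ - x₁`, and of the intervals meeting `[x₁, x₂]` without
lying inside it, at most one contains `x₁` and at most one contains `x₂`.
-/

/-- The one-dimensional Bregman divergence `Dφ(x,y) = φ(x) − φ(y) − φ'(y)(x−y)`. -/
noncomputable def bregman (φ : ℝ → ℝ) (x y : ℝ) : ℝ :=
  φ x - φ y - deriv φ y * (x - y)

open Set MeasureTheory

lemma bregman_nonneg_of_convexOn {f : ℝ → ℝ} {S : Set ℝ} {a b : ℝ} (hf : ConvexOn ℝ S f)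
    (hfb : DifferentiableAt ℝ f b) (ha : a ∈ S) (hb : b ∈ S) : 0 ≤ bregman f a b := by
  unfold bregman
  rcases lt_trichotomy a b with hab | rfl | hab
  · have h := hf.slope_le_deriv ha hb hab hfb
    rw [slope_def_field, div_le_iff₀ (sub_pos.2 hab)] at h
    linarith
  · simp
  · have h := hf.deriv_le_slope hb ha hab hfb
    rw [slope_def_field, le_div_iff₀ (sub_pos.2 hab)] at h
    linarith

lemma bregman_sub {f g : ℝ → ℝ} {x y : ℝ} (hf : DifferentiableAt ℝ f y)
    (hg : DifferentiableAt ℝ g y) :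
    bregman (f - g) x y = bregman f x y - bregman g x y := by
  simp only [bregman, deriv_sub hf hg, Pi.sub_apply]
  ring

lemma bregman_le_bregman_of_deriv2_le {f g : ℝ → ℝ} {S : Set ℝ} {a b : ℝ} (hS : Convex ℝ S)
    (hf : Differentiable ℝ f) (hf' : Differentiable ℝ (deriv f))
    (hg : Differentiable ℝ g) (hg' : Differentiable ℝ (deriv g))
    (hfg : ∀ x ∈ S, deriv (deriv f) x ≤ deriv (deriv g) x) (ha : a ∈ S) (hb : b ∈ S) :
    bregman f a b ≤ bregman g a b := by
  have hderiv : deriv (g - f) = deriv g - deriv f := funext fun x => deriv_sub (hg x) (hf x)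
  have hconv : ConvexOn ℝ S (g - f) := by
    refine convexOn_of_deriv2_nonneg' hS (hg.sub hf).differentiableOn ?_ fun x hx => ?_
    · rw [hderiv]
      exact (hg'.sub hf').differentiableOn
    · rw [Function.iterate_succ_apply, Function.iterate_one, hderiv, deriv_sub (hg' x) (hf' x)]
      exact sub_nonneg.2 (hfg x hx)
  have h := bregman_nonneg_of_convexOn hconv ((hg b).sub (hf b)) ha hb
  rw [bregman_sub (hg b) (hf b)] at h
  linarith

lemma deriv_half_mul_sq (c : ℝ) : deriv (fun x : ℝ => c / 2 * x ^ 2) = fun x => c * x := by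
  funext x
  simp only [deriv_const_mul_field', deriv_pow_field]
  ring

lemma deriv_deriv_half_mul_sq (c x : ℝ) : deriv (deriv fun x : ℝ => c / 2 * x ^ 2) x = c := by
  rw [deriv_half_mul_sq]
  simp

lemma bregman_half_mul_sq (c a b : ℝ) :
    bregman (fun x => c / 2 * x ^ 2) a b = c / 2 * (a - b) ^ 2 := by
  simp only [bregman, deriv_half_mul_sq]
  ring

section QuadraticBounds

variable {φ : ℝ → ℝ} {I : Set ℝ} {c a b : ℝ}

lemma half_mul_sq_le_bregman (hI : Convex ℝ I) (hφ : Differentiable ℝ φ)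
    (hφ' : Differentiable ℝ (deriv φ)) (hc : ∀ x ∈ I, c ≤ deriv (deriv φ) x)
    (ha : a ∈ I) (hb : b ∈ I) : c / 2 * (a - b) ^ 2 ≤ bregman φ a b := by
  rw [← bregman_half_mul_sq]
  refine bregman_le_bregman_of_deriv2_le hI (by fun_prop) (by rw [deriv_half_mul_sq]; fun_prop)
    hφ hφ' (fun x hx => ?_) ha hb
  rw [deriv_deriv_half_mul_sq]
  exact hc x hx

lemma bregman_le_half_mul_sq (hI : Convex ℝ I) (hφ : Differentiable ℝ φ)
    (hφ' : Differentiable ℝ (deriv φ)) (hc : ∀ x ∈ I, deriv (deriv φ) x ≤ c)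
    (ha : a ∈ I) (hb : b ∈ I) : bregman φ a b ≤ c / 2 * (a - b) ^ 2 := by
  rw [← bregman_half_mul_sq]
  refine bregman_le_bregman_of_deriv2_le hI hφ hφ' (by fun_prop)
    (by rw [deriv_half_mul_sq]; fun_prop) (fun x hx => ?_) ha hb
  rw [deriv_deriv_half_mul_sq]
  exact hc x hx

end QuadraticBounds

lemma sqrt_half_mul_sq_sub {a b : ℝ} (c : ℝ) (hab : a ≤ b) :
    √(c / 2 * (a - b) ^ 2) = √(c / 2) * (b - a) := by
  rw [Real.sqrt_mul' _ (sq_nonneg _), Real.sqrt_sq_eq_abs, abs_sub_comm,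
    abs_of_nonneg (sub_nonneg.2 hab)]

lemma mem_or_mem_of_not_Icc_subset_Icc {α : Type*} [LinearOrder α] {a b c d : α}
    (hmeet : (Icc c d ∩ Icc a b).Nonempty) (hns : ¬Icc c d ⊆ Icc a b) :
    a ∈ Icc c d ∨ b ∈ Icc c d := by
  obtain ⟨t, ⟨hct, htd⟩, hat, htb⟩ := hmeet
  by_contra! h
  simp only [mem_Icc, not_and_or, not_le] at h
  refine hns (Icc_subset_Icc ?_ ?_)
  · rcases h.1 with h | h
    · exact h.le
    · exact absurd (hat.trans htd) h.not_ge
  · rcases h.2 with h | h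
    · exact absurd (hct.trans htb) h.not_ge
    · exact h.le

lemma card_filter_mem_Icc_le_one {α : Type*} [LinearOrder α] {S : Finset (α × α)}
    (hdisj : (S : Set (α × α)).PairwiseDisjoint fun p => Icc p.1 p.2) (x : α) :
    (S.filter fun p => x ∈ Icc p.1 p.2).card ≤ 1 := by
  refine Finset.card_le_one.2 fun p hp q hq => ?_
  rw [Finset.mem_filter] at hp hq
  by_contra hne
  exact disjoint_left.1 (hdisj hp.1 hq.1 hne) hp.2 hq.2

lemma sum_sub_le_of_pairwiseDisjoint_Icc {S : Finset (ℝ × ℝ)} {a b : ℝ} (hab : a ≤ b)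
    (hS : ∀ p ∈ S, p.1 ≤ p.2) (hdisj : (S : Set (ℝ × ℝ)).PairwiseDisjoint fun p => Icc p.1 p.2)
    (hsub : ∀ p ∈ S, Icc p.1 p.2 ⊆ Icc a b) :
    ∑ p ∈ S, (p.2 - p.1) ≤ b - a := by
  rw [← ENNReal.ofReal_le_ofReal_iff (sub_nonneg.2 hab)]
  calc ENNReal.ofReal (∑ p ∈ S, (p.2 - p.1))
      = ∑ p ∈ S, volume (Icc p.1 p.2) := by
        rw [ENNReal.ofReal_sum_of_nonneg fun p hp => sub_nonneg.2 (hS p hp)]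
        simp only [Real.volume_Icc]
    _ = volume (⋃ p ∈ S, Icc p.1 p.2) :=
        (measure_biUnion_finset hdisj fun _ _ => measurableSet_Icc).symm
    _ ≤ volume (Icc a b) := measure_mono (iUnion₂_subset hsub)
    _ = ENNReal.ofReal (b - a) := Real.volume_Icc

lemma card_le_div_add_two_of_pairwiseDisjoint_Icc {S : Finset (ℝ × ℝ)} {a b L : ℝ}
    (hab : a ≤ b) (hL : 0 < L) (hlen : ∀ p ∈ S, L ≤ p.2 - p.1)
    (hdisj : (S : Set (ℝ × ℝ)).PairwiseDisjoint fun p => Icc p.1 p.2)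
    (hmeet : ∀ p ∈ S, (Icc p.1 p.2 ∩ Icc a b).Nonempty) :
    (S.card : ℝ) ≤ (b - a) / L + 2 := by
  classical
  set T := S.filter fun p => Icc p.1 p.2 ⊆ Icc a b
  have hT : (T.card : ℝ) ≤ (b - a) / L := by
    rw [le_div_iff₀ hL]
    calc (T.card : ℝ) * L = ∑ _p ∈ T, L := by rw [Finset.sum_const, nsmul_eq_mul]
      _ ≤ ∑ p ∈ T, (p.2 - p.1) :=
        Finset.sum_le_sum fun p hp => hlen p (Finset.mem_filter.1 hp).1
      _ ≤ b - a := sum_sub_le_of_pairwiseDisjoint_Icc hab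
          (fun p hp => by linarith [hlen p (Finset.mem_filter.1 hp).1])
          (hdisj.subset (Finset.coe_subset.2 (Finset.filter_subset _ _)))
          fun p hp => (Finset.mem_filter.1 hp).2
  have hrest : (S.filter fun p => ¬Icc p.1 p.2 ⊆ Icc a b).card ≤ 2 :=
    calc _ ≤ ((S.filter fun p => a ∈ Icc p.1 p.2) ∪ S.filter fun p => b ∈ Icc p.1 p.2).card := by
          refine Finset.card_le_card fun p hp => ?_
          rw [Finset.mem_filter] at hp
          simpa only [Finset.mem_union, Finset.mem_filter, hp.1, true_and]
            using mem_or_mem_of_not_Icc_subset_Icc (hmeet p hp.1) hp.2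
      _ ≤ 1 + 1 := (Finset.card_union_le _ _).trans
          (add_le_add (card_filter_mem_Icc_le_one hdisj a) (card_filter_mem_Icc_le_one hdisj b))
  calc (S.card : ℝ) = T.card + (S.filter fun p => ¬Icc p.1 p.2 ⊆ Icc a b).card := by
        exact_mod_cast (Finset.card_filter_add_card_filter_not _).symm
    _ ≤ (b - a) / L + 2 := add_le_add hT (by exact_mod_cast hrest)

theorem sqrt_bregman_interval_packing_general (φ : ℝ → ℝ) (I : Set ℝ) (hI : Convex ℝ I)
    (hd1 : Differentiable ℝ φ) (hd2 : Differentiable ℝ (deriv φ))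
    (m M : ℝ) (hm : 0 < m)
    (hbound : ∀ x ∈ I, m ≤ deriv (deriv φ) x ∧ deriv (deriv φ) x ≤ M)
    (c₀ : ℝ) (hc₀ : c₀ = Real.sqrt (M / m))
    (x₁ x₂ : ℝ) (hle : x₁ ≤ x₂) (hsub : Set.Icc x₁ x₂ ⊆ I)
    (r l : ℝ) (hr : Real.sqrt (bregman φ x₁ x₂) = r) (hl : 0 < l)
    (I' : Finset (ℝ × ℝ))
    (hvalid : ∀ p ∈ I', p.1 ≤ p.2)
    (hIsub : ∀ p ∈ I', Set.Icc p.1 p.2 ⊆ I)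
    (hdisj : ∀ p ∈ I', ∀ q ∈ I', p ≠ q → Disjoint (Set.Icc p.1 p.2) (Set.Icc q.1 q.2))
    (hinter : ∀ p ∈ I', (Set.Icc p.1 p.2 ∩ Set.Icc x₁ x₂).Nonempty)
    (hlen : ∀ p ∈ I', l ≤ Real.sqrt (bregman φ p.1 p.2)) :
    (I'.card : ℝ) ≤ c₀ * r / l + 2 := by
  have hx₁ : x₁ ∈ I := hsub (left_mem_Icc.2 hle)
  have hx₂ : x₂ ∈ I := hsub (right_mem_Icc.2 hle)
  have hM : 0 < M := hm.trans_le ((hbound x₁ hx₁).1.trans (hbound x₁ hx₁).2)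
  have hk : 0 < √(m / 2) := by positivity
  have hK : 0 < √(M / 2) := by positivity
  have hwidth : x₂ - x₁ ≤ r / √(m / 2) := by
    rw [le_div_iff₀' hk, ← sqrt_half_mul_sq_sub m hle, ← hr]
    exact Real.sqrt_le_sqrt
      (half_mul_sq_le_bregman hI hd1 hd2 (fun x hx => (hbound x hx).1) hx₁ hx₂)
  have hlength : ∀ p ∈ I', l / √(M / 2) ≤ p.2 - p.1 := by
    intro p hp
    have hp₁ : p.1 ∈ I := hIsub p hp (left_mem_Icc.2 (hvalid p hp))
    have hp₂ : p.2 ∈ I := hIsub p hp (right_mem_Icc.2 (hvalid p hp))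
    rw [div_le_iff₀' hK, ← sqrt_half_mul_sq_sub M (hvalid p hp)]
    exact (hlen p hp).trans (Real.sqrt_le_sqrt
      (bregman_le_half_mul_sq hI hd1 hd2 (fun x hx => (hbound x hx).2) hp₁ hp₂))
  calc (I'.card : ℝ) ≤ (x₂ - x₁) / (l / √(M / 2)) + 2 :=
        card_le_div_add_two_of_pairwiseDisjoint_Icc hle (by positivity) hlength hdisj hinter
    _ ≤ r / √(m / 2) / (l / √(M / 2)) + 2 := by gcongr
    _ = c₀ * r / l + 2 := by
        rw [hc₀, show M / m = M / 2 / (m / 2) by field_simp, Real.sqrt_div' _ (half_pos hm).le]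
        field_simp

theorem sqrt_bregman_interval_packing (φ : ℝ → ℝ) (I : Set ℝ) (hI : Convex ℝ I)
    (hd1 : Differentiable ℝ φ) (hd2 : Differentiable ℝ (deriv φ))
    (hcont : ContinuousOn (deriv (deriv φ)) I)
    (m M : ℝ) (hm : 0 < m)
    (hbound : ∀ x ∈ I, m ≤ deriv (deriv φ) x ∧ deriv (deriv φ) x ≤ M)
    (c₀ : ℝ) (hc₀ : c₀ = Real.sqrt (M / m))
    (x₁ x₂ : ℝ) (hle : x₁ ≤ x₂) (hsub : Set.Icc x₁ x₂ ⊆ I)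
    (r l : ℝ) (hr : Real.sqrt (bregman φ x₁ x₂) = r) (hrpos : 0 < r) (hl : 0 < l)
    (I' : Finset (ℝ × ℝ))
    (hvalid : ∀ p ∈ I', p.1 ≤ p.2)
    (hIsub : ∀ p ∈ I', Set.Icc p.1 p.2 ⊆ I)
    (hdisj : ∀ p ∈ I', ∀ q ∈ I', p ≠ q → Disjoint (Set.Icc p.1 p.2) (Set.Icc q.1 q.2))
    (hinter : ∀ p ∈ I', (Set.Icc p.1 p.2 ∩ Set.Icc x₁ x₂).Nonempty)
    (hlen : ∀ p ∈ I', l ≤ Real.sqrt (bregman φ p.1 p.2)) :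
    (I'.card : ℝ) ≤ c₀ * r / l + 2 :=
  sqrt_bregman_interval_packing_general φ I hI hd1 hd2 m M hm hbound c₀ hc₀ x₁ x₂ hle hsub r l hr hl
    I' hvalid hIsub hdisj hinter hlen
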